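/- Let G be a finite simple graph with Ore-degree θ(G) ≤ 7 such that G admits no strong edge-coloring with 13 colors but every proper subgraph of G admits a strong edge-coloring with 13 colors. Then for every edge uv of G, the graph obtained from G by deleting both vertices u and v is connected; that is, {u,v} is not a vertex cut of G. -/

import Mathlib

/-- Two edges `e` and `f` of a graph `G` *see* each other if they are contained in a
common path or cycle of length at most three, i.e. they share an endpoint or some
endpoint of `e` is adjacent to some endpoint of `f`. -/
def SimpleGraph.Sees {V : Type*} (G : SimpleGraph V) (e f : Sym2 V) : Prop :=
  ∃ u ∈ e, ∃ v ∈ f, u = v ∨ G.Adj u v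

/-- `c` is a strong edge-coloring of `G`: edges that see each other get distinct colors. -/
def SimpleGraph.IsStrongEdgeColoring {V α : Type*} (G : SimpleGraph V) (c : Sym2 V → α) : Prop :=
  ∀ e ∈ G.edgeSet, ∀ f ∈ G.edgeSet, e ≠ f → G.Sees e f → c e ≠ c f

/-- `G` admits a strong edge-coloring with `n` colors. -/
def SimpleGraph.HasStrongColoring {V : Type*} (G : SimpleGraph V) (n : ℕ) : Prop :=
  ∃ c : Sym2 V → Fin n, G.IsStrongEdgeColoring c

/-!
Suppose `G - {u, v}` is disconnected, and split its vertices into a nonempty union `A` of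
components and the nonempty rest `B`. Since `{u, v}` is a clique, the edges at `u` or `v` pairwise
see each other, so strong colorings of `G` minus the edges inside `B` and of `G` minus the edges
inside `A` agree on them up to a permutation of the colors, and then glue to a strong coloring of
`G`. Both graphs are proper subgraphs unless some vertex `x ∉ {u, v}` has all its neighbours in
`{u, v}`. Such an `x` is isolated (delete it), or adjacent to some `p ∈ {u, v}` with
`N(x) ⊆ N[p]`; then a coloring of `G - px` is still strong for `G`, and `px` sees at most
`(d - 1)(8 - d) ≤ 12` edges, `d = deg p`, because every edge it sees touches `p` or a neighbour
of `p` other than `x`, and neighbours of `p` have degree at most `7 - d`.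
-/

namespace SimpleGraph

variable {V W : Type*} {G : SimpleGraph V} {n : ℕ}

lemma Sees.symm {e f : Sym2 V} (h : G.Sees e f) : G.Sees f e := by
  obtain ⟨a, ha, b, hb, rfl | hab⟩ := h
  · exact ⟨a, hb, a, ha, .inl rfl⟩
  · exact ⟨b, hb, a, ha, .inr hab.symm⟩

lemma HasStrongColoring.of_hom {H : SimpleGraph W} (φ : G →g H)
    (hφ : Set.InjOn (Sym2.map φ) G.edgeSet) (h : H.HasStrongColoring n) :
    G.HasStrongColoring n := by
  obtain ⟨c, hc⟩ := h
  refine ⟨c ∘ Sym2.map φ, fun e he f hf hef ⟨a, ha, b, hb, hab⟩ => ?_⟩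
  refine hc _ (φ.map_mem_edgeSet he) _ (φ.map_mem_edgeSet hf) (fun h => hef (hφ he hf h)) ?_
  exact ⟨φ a, Sym2.mem_map.2 ⟨a, ha, rfl⟩, φ b, Sym2.mem_map.2 ⟨b, hb, rfl⟩,
    hab.imp (congrArg φ) φ.map_adj⟩

lemma Subgraph.hasStrongColoring_spanningCoe {H : G.Subgraph} (hH : H.verts.Nonempty)
    (h : H.coe.HasStrongColoring n) : H.spanningCoe.HasStrongColoring n := by
  classical
  obtain ⟨x₀, hx₀⟩ := hH
  let φ : H.spanningCoe →g H.coe :=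
    { toFun := fun x => if hx : x ∈ H.verts then ⟨x, hx⟩ else ⟨x₀, hx₀⟩
      map_rel' := fun {a b} hab => by simpa [H.edge_vert hab, H.edge_vert hab.symm] }
  have hval : ∀ e ∈ H.spanningCoe.edgeSet, (e.map φ).map Subtype.val = e := by
    intro e he
    rw [Sym2.map_map]
    refine (Sym2.map_congr fun x hx => ?_).trans (congrFun Sym2.map_id' e)
    simp [φ, H.mem_verts_of_mem_edge he hx]
  exact h.of_hom φ fun e he f hf hef => by rw [← hval e he, ← hval f hf, hef]

lemma HasStrongColoring.of_deleteEdges_singleton {e : Sym2 V} (s : Finset (Sym2 V))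
    (hs : ∀ f ∈ G.edgeSet, f ≠ e → G.Sees e f → f ∈ s) (hsn : s.card < n)
    (hlift : ∀ f ∈ G.edgeSet, ∀ g ∈ G.edgeSet, f ≠ e → g ≠ e → G.Sees f g →
      (G.deleteEdges {e}).Sees f g)
    (h : (G.deleteEdges {e}).HasStrongColoring n) : G.HasStrongColoring n := by
  classical
  obtain ⟨c, hc⟩ := h
  obtain ⟨k, -, hk⟩ := Finset.exists_mem_notMem_of_card_lt_card
    (s := s.image c) (t := Finset.univ) (by simpa using Finset.card_image_le.trans_lt hsn)
  have hfresh : ∀ f ∈ G.edgeSet, f ≠ e → G.Sees e f → k ≠ c f :=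
    fun f hf hfe hef hkf => hk (hkf ▸ Finset.mem_image_of_mem c (hs f hf hfe hef))
  refine ⟨Function.update c e k, fun f hf g hg hfg hsees => ?_⟩
  rcases eq_or_ne f e with rfl | hfe
  · rw [Function.update_self, Function.update_of_ne hfg.symm]
    exact hfresh g hg hfg.symm hsees
  rcases eq_or_ne g e with rfl | hge
  · rw [Function.update_self, Function.update_of_ne hfe]
    exact (hfresh f hf hfe hsees.symm).symm
  rw [Function.update_of_ne hfe, Function.update_of_ne hge]
  exact hc f (by simp [hf, hfe]) g (by simp [hg, hge]) hfg (hlift f hf g hg hfe hge hsees)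

section Dominated

variable {p b : V}

lemma Sees.deleteEdges_of_neighborSet_subset
    (hb : G.neighborSet b ⊆ insert p (G.neighborSet p)) {f g : Sym2 V}
    (hf : f ∈ G.edgeSet) (hg : g ∈ G.edgeSet) (hfe : f ≠ s(p, b)) (hge : g ≠ s(p, b))
    (h : G.Sees f g) : (G.deleteEdges {s(p, b)}).Sees f g := by
  -- a path `f, pb, g` through the deleted edge is rerouted through `py`, where `g = by`
  have reroute : ∀ {f g}, g ∈ G.edgeSet → g ≠ s(p, b) → p ∈ f → b ∈ g →
      (G.deleteEdges {s(p, b)}).Sees f g := by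
    intro f g hg hge hpf hbg
    obtain ⟨y, rfl⟩ := Sym2.mem_iff_exists.1 hbg
    have hyp : y ≠ p := by rintro rfl; exact hge Sym2.eq_swap
    have hpy : G.Adj p y := (hb hg).resolve_left hyp
    exact ⟨p, hpf, y, Sym2.mem_mk_right b y, .inr (by simp [hpy, hg.ne.symm, hyp])⟩
  obtain ⟨a, ha, z, hz, rfl | haz⟩ := h
  · exact ⟨a, ha, a, hz, .inl rfl⟩
  by_cases hdel : s(a, z) = s(p, b)
  · rcases Sym2.eq_iff.1 hdel with ⟨rfl, rfl⟩ | ⟨rfl, rfl⟩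
    · exact reroute hg hge ha hz
    · exact (reroute hf hfe hz ha).symm
  · exact ⟨a, ha, z, hz, .inr (by simp [haz, hdel])⟩

variable [Fintype V] [DecidableEq V] [DecidableRel G.Adj]

lemma mem_incidenceFinset_union_of_sees (hpb : G.Adj p b)
    (hb : G.neighborSet b ⊆ insert p (G.neighborSet p)) {f : Sym2 V} (hf : f ∈ G.edgeSet)
    (hfe : f ≠ s(p, b)) (h : G.Sees s(p, b) f) :
    f ∈ (G.incidenceFinset p).erase s(p, b) ∪
      ((G.neighborFinset p).erase b).biUnion fun w => G.incidenceFinset w := by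
  suffices p ∈ f ∨ ∃ w, G.Adj p w ∧ w ≠ b ∧ w ∈ f by
    rcases this with hpf | ⟨w, hpw, hwb, hwf⟩
    · exact Finset.mem_union_left _
        (Finset.mem_erase.2 ⟨hfe, (G.mem_incidenceFinset _ _).2 ⟨hf, hpf⟩⟩)
    · exact Finset.mem_union_right _ (Finset.mem_biUnion.2
        ⟨w, by simp [hpw, hwb], (G.mem_incidenceFinset _ _).2 ⟨hf, hwf⟩⟩)
  have of_mem_b : b ∈ f → ∃ w, G.Adj p w ∧ w ≠ b ∧ w ∈ f := by
    intro hbf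
    obtain ⟨y, rfl⟩ := Sym2.mem_iff_exists.1 hbf
    have hyp : y ≠ p := by rintro rfl; exact hfe Sym2.eq_swap
    exact ⟨y, (hb hf).resolve_left hyp, hf.ne.symm, Sym2.mem_mk_right b y⟩
  obtain ⟨a, ha, z, hz, haz⟩ := h
  have hz' : z = p ∨ z = b ∨ G.Adj p z := by
    rcases Sym2.mem_iff.1 ha with rfl | rfl
    · exact haz.imp (·.symm) .inr
    · rcases haz with rfl | haz
      · exact .inr (.inl rfl)
      · exact (hb haz).imp id .inr
  rcases hz' with rfl | rfl | hpz
  · exact .inl hz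
  · exact .inr (of_mem_b hz)
  · by_cases hzb : z = b
    · exact .inr (of_mem_b (hzb ▸ hz))
    · exact .inr ⟨z, hpz, hzb, hz⟩

lemma card_incidenceFinset_union_le {k : ℕ}
    (hore : ∀ x y, G.Adj x y → G.degree x + G.degree y ≤ k) (hpb : G.Adj p b) :
    ((G.incidenceFinset p).erase s(p, b) ∪
      ((G.neighborFinset p).erase b).biUnion fun w => G.incidenceFinset w).card ≤
      (G.degree p - 1) + (G.degree p - 1) * (k - G.degree p) := by
  have hnbr : ∀ w ∈ (G.neighborFinset p).erase b,
      (G.incidenceFinset w).card ≤ k - G.degree p := by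
    intro w hw
    have := hore p w ((G.mem_neighborFinset p w).1 (Finset.mem_of_mem_erase hw))
    rw [card_incidenceFinset_eq_degree]
    omega
  calc _ ≤ ((G.incidenceFinset p).erase s(p, b)).card +
        (((G.neighborFinset p).erase b).biUnion fun w => G.incidenceFinset w).card :=
          Finset.card_union_le _ _
    _ ≤ (G.degree p - 1) + ∑ w ∈ (G.neighborFinset p).erase b, (G.incidenceFinset w).card := by
        gcongr
        · rw [Finset.card_erase_of_mem (by simpa using hpb), card_incidenceFinset_eq_degree]
        · exact Finset.card_biUnion_le
    _ ≤ _ := by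
        gcongr
        refine (Finset.sum_le_card_nsmul _ _ _ hnbr).trans_eq ?_
        rw [Finset.card_erase_of_mem (by simpa using hpb), card_neighborFinset_eq_degree,
          smul_eq_mul]

end Dominated

lemma deleteEdges_lt_of_mem {s : Set (Sym2 V)} {e : Sym2 V} (he : e ∈ G.edgeSet)
    (hes : e ∈ s) : G.deleteEdges s < G := by
  refine (deleteEdges_le s).lt_of_ne fun h => ?_
  have : e ∈ (G.deleteEdges s).edgeSet := by rwa [h]
  rw [edgeSet_deleteEdges] at this
  exact this.2 hes

structure IsStrongCritical (G : SimpleGraph V) (n : ℕ) : Prop where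
  not_hasStrongColoring : ¬ G.HasStrongColoring n
  hasStrongColoring_coe : ∀ H : G.Subgraph, H ≠ ⊤ → H.coe.HasStrongColoring n

namespace IsStrongCritical

lemma hasStrongColoring_of_lt (hG : G.IsStrongCritical n) {G' : SimpleGraph V} (h : G' < G) :
    G'.HasStrongColoring n := by
  obtain ⟨x, -⟩ : ∃ x y, G.Adj x y := by
    by_contra! hG'
    exact h.not_ge fun x y hxy => absurd hxy (hG' x y)
  refine Subgraph.hasStrongColoring_spanningCoe (H := toSubgraph (G := G) G' h.le) ⟨x, trivial⟩
    (hG.hasStrongColoring_coe _ fun htop => h.ne ?_)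
  exact (congrArg Subgraph.spanningCoe htop).trans Subgraph.spanningCoe_top

lemma exists_adj (hG : G.IsStrongCritical n) {a b : V} (hab : a ≠ b) : ∃ y, G.Adj b y := by
  by_contra! hb
  let H := (⊤ : G.Subgraph).deleteVerts {b}
  have hH : H.spanningCoe = G := by
    ext x y
    simp only [H, Subgraph.spanningCoe_adj, Subgraph.deleteVerts_adj, Subgraph.top_adj]
    exact ⟨fun h => h.2.2.2.2, fun h => ⟨trivial, fun hx => hb y (hx ▸ h), trivial,
      fun hy => hb x (hy ▸ h.symm), h⟩⟩
  have hne : H ≠ ⊤ := fun htop => by simpa [H] using congrArg (b ∈ ·.verts) htop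
  exact hG.not_hasStrongColoring <|
    hH ▸ Subgraph.hasStrongColoring_spanningCoe ⟨a, by simpa [H]⟩
      (hG.hasStrongColoring_coe H hne)

lemma not_neighborSet_subset [Fintype V] [DecidableRel G.Adj] (hG : G.IsStrongCritical 13)
    (hore : ∀ x y, G.Adj x y → G.degree x + G.degree y ≤ 7) {p b : V} (hpb : G.Adj p b) :
    ¬ G.neighborSet b ⊆ insert p (G.neighborSet p) := by
  classical
  intro hb
  have hcard : (G.degree p - 1) + (G.degree p - 1) * (7 - G.degree p) < 13 := by
    have : G.degree p ≤ 7 := (Nat.le_add_right _ _).trans (hore p b hpb)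
    interval_cases G.degree p <;> norm_num
  exact hG.not_hasStrongColoring <| HasStrongColoring.of_deleteEdges_singleton _
    (fun f hf hfe h => mem_incidenceFinset_union_of_sees hpb hb hf hfe h)
    ((card_incidenceFinset_union_le hore hpb).trans_lt hcard)
    (fun f hf g hg hfe hge h => h.deleteEdges_of_neighborSet_subset hb hf hg hfe hge)
    (hG.hasStrongColoring_of_lt (deleteEdges_lt_of_mem hpb rfl))

lemma exists_adj_ne_ne [Fintype V] [DecidableRel G.Adj] (hG : G.IsStrongCritical 13)
    (hore : ∀ x y, G.Adj x y → G.degree x + G.degree y ≤ 7) {u v x : V} (huv : G.Adj u v)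
    (hxu : x ≠ u) (hxv : x ≠ v) : ∃ z, G.Adj x z ∧ z ≠ u ∧ z ≠ v := by
  by_contra! hx
  have hxN : ∀ y, G.Adj x y → y = u ∨ y = v := fun y hy => or_iff_not_imp_left.2 (hx y hy)
  obtain ⟨p, hxp⟩ := hG.exists_adj hxu.symm
  rcases hxN p hxp with rfl | rfl
  · exact hG.not_neighborSet_subset hore hxp.symm fun y hy =>
      (hxN y hy).imp id fun (hyv : y = v) => hyv ▸ huv
  · exact hG.not_neighborSet_subset hore hxp.symm fun y hy =>
      (hxN y hy).symm.imp id fun (hyu : y = u) => hyu ▸ huv.symm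

end IsStrongCritical

section CliqueSeparator

lemma sees_deleteEdges_sym2_of_mem_sym2 {X Y : Set V} (hXY : ∀ x ∈ X, ∀ y, G.Adj x y → y ∉ Y)
    {e f : Sym2 V} (he : e ∈ G.edgeSet) (heX : e ∈ X.sym2) (hf : f ∈ G.edgeSet)
    (h : G.Sees e f) :
    e ∈ (G.deleteEdges Y.sym2).edgeSet ∧ f ∈ (G.deleteEdges Y.sym2).edgeSet ∧
      (G.deleteEdges Y.sym2).Sees e f := by
  have hnY : ∀ a ∈ e, a ∉ Y := by
    intro a ha
    obtain ⟨a', rfl⟩ := Sym2.mem_iff_exists.1 ha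
    exact hXY a' heX.2 a (G.mem_edgeSet.1 he).symm
  obtain ⟨a, ha, z, hz, haz⟩ := h
  have hzY : z ∉ Y := by
    rcases haz with rfl | haz
    exacts [hnY _ ha, hXY a (Set.mem_sym2_iff_subset.1 heX ha) z haz]
  rw [edgeSet_deleteEdges]
  refine ⟨⟨he, fun h => hnY a ha (Set.mem_sym2_iff_subset.1 h ha)⟩,
    ⟨hf, fun h => hzY (Set.mem_sym2_iff_subset.1 h hz)⟩, a, ha, z, hz, ?_⟩
  exact haz.imp_right fun haz => (deleteEdges_adj ..).2 ⟨haz, fun h => hnY a ha h.1⟩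

lemma sees_deleteEdges_sym2_of_isClique {S Y : Set V} (hS : G.IsClique S) (hSY : Disjoint S Y)
    {e f : Sym2 V} (he : e ∈ G.edgeSet) (hf : f ∈ G.edgeSet) (heS : ∃ s ∈ e, s ∈ S)
    (hfS : ∃ t ∈ f, t ∈ S) :
    e ∈ (G.deleteEdges Y.sym2).edgeSet ∧ f ∈ (G.deleteEdges Y.sym2).edgeSet ∧
      (G.deleteEdges Y.sym2).Sees e f := by
  obtain ⟨s, hse, hs⟩ := heS
  obtain ⟨t, htf, ht⟩ := hfS
  rw [edgeSet_deleteEdges]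
  refine ⟨⟨he, fun h => hSY.notMem_of_mem_left hs (Set.mem_sym2_iff_subset.1 h hse)⟩,
    ⟨hf, fun h => hSY.notMem_of_mem_left ht (Set.mem_sym2_iff_subset.1 h htf)⟩,
    s, hse, t, htf, ?_⟩
  by_cases hst : s = t
  · exact .inl hst
  · exact .inr ((deleteEdges_adj ..).2 ⟨hS hs ht hst, fun h => hSY.notMem_of_mem_left hs h.1⟩)

lemma IsStrongEdgeColoring.glue {G₁ G₂ : SimpleGraph V} {c₁ c₂ : Sym2 V → Fin n}
    (h₁ : G₁.IsStrongEdgeColoring c₁) (h₂ : G₂.IsStrongEdgeColoring c₂)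
    (hagree : ∀ e ∈ G₁.edgeSet, e ∈ G₂.edgeSet → c₁ e = c₂ e)
    (hsplit : ∀ e ∈ G.edgeSet, ∀ f ∈ G.edgeSet, G.Sees e f →
      (e ∈ G₁.edgeSet ∧ f ∈ G₁.edgeSet ∧ G₁.Sees e f) ∨
        (e ∈ G₂.edgeSet ∧ f ∈ G₂.edgeSet ∧ G₂.Sees e f)) :
    G.HasStrongColoring n := by
  classical
  refine ⟨fun e => if e ∈ G₁.edgeSet then c₁ e else c₂ e, fun e he f hf hef h => ?_⟩
  rcases hsplit e he f hf h with ⟨he₁, hf₁, h₁ef⟩ | ⟨he₂, hf₂, h₂ef⟩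
  · simpa only [if_pos he₁, if_pos hf₁] using h₁ e he₁ f hf₁ hef h₁ef
  · have hc₂ : ∀ g ∈ G₂.edgeSet, (if g ∈ G₁.edgeSet then c₁ g else c₂ g) = c₂ g := by
      intro g hg
      split_ifs with hg₁
      exacts [hagree g hg₁ hg, rfl]
    simpa only [hc₂ e he₂, hc₂ f hf₂] using h₂ e he₂ f hf₂ hef h₂ef

variable {S A : Set V}

lemma notMem_of_adj_of_mem_compl (hA : ∀ a ∈ A, ∀ y, G.Adj a y → y ∈ A ∪ S) :
    ∀ b ∈ (A ∪ S)ᶜ, ∀ y, G.Adj b y → y ∉ A :=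
  fun b hb y hby hy => hb (hA y hy b hby.symm)

lemma mem_sym2_or_mem_sym2_or_exists_mem (hA : ∀ a ∈ A, ∀ y, G.Adj a y → y ∈ A ∪ S)
    {e : Sym2 V} (he : e ∈ G.edgeSet) :
    e ∈ A.sym2 ∨ e ∈ (A ∪ S)ᶜ.sym2 ∨ ∃ s ∈ e, s ∈ S := by
  induction e with
  | _ x y =>
    by_cases hx : x ∈ S
    · exact .inr (.inr ⟨x, Sym2.mem_mk_left x y, hx⟩)
    by_cases hy : y ∈ S
    · exact .inr (.inr ⟨y, Sym2.mem_mk_right x y, hy⟩)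
    by_cases hxA : x ∈ A
    · exact .inl ⟨hxA, (hA x hxA y he).resolve_right hy⟩
    · have hyA : y ∉ A := fun hyA => hxA ((hA y hyA x he.symm).resolve_right hx)
      exact .inr (.inl ⟨by simp [hxA, hx], by simp [hyA, hy]⟩)

lemma sees_on_one_side_of_isClique_separator (hS : G.IsClique S)
    (hA : ∀ a ∈ A, ∀ y, G.Adj a y → y ∈ A ∪ S) {e f : Sym2 V} (he : e ∈ G.edgeSet)
    (hf : f ∈ G.edgeSet) (h : G.Sees e f) :
    (e ∈ (G.deleteEdges (A ∪ S)ᶜ.sym2).edgeSet ∧ f ∈ (G.deleteEdges (A ∪ S)ᶜ.sym2).edgeSet ∧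
        (G.deleteEdges (A ∪ S)ᶜ.sym2).Sees e f) ∨
      (e ∈ (G.deleteEdges A.sym2).edgeSet ∧ f ∈ (G.deleteEdges A.sym2).edgeSet ∧
        (G.deleteEdges A.sym2).Sees e f) := by
  have hAB : ∀ a ∈ A, ∀ y, G.Adj a y → y ∉ (A ∪ S)ᶜ := fun a ha y hay hy => hy (hA a ha y hay)
  have hBA := notMem_of_adj_of_mem_compl hA
  have swap : ∀ {H : SimpleGraph V}, f ∈ H.edgeSet ∧ e ∈ H.edgeSet ∧ H.Sees f e →
      e ∈ H.edgeSet ∧ f ∈ H.edgeSet ∧ H.Sees e f := fun ⟨hf, he, h⟩ => ⟨he, hf, h.symm⟩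
  rcases mem_sym2_or_mem_sym2_or_exists_mem hA he with heA | heB | heS
  · exact .inl (sees_deleteEdges_sym2_of_mem_sym2 hAB he heA hf h)
  · exact .inr (sees_deleteEdges_sym2_of_mem_sym2 hBA he heB hf h)
  rcases mem_sym2_or_mem_sym2_or_exists_mem hA hf with hfA | hfB | hfS
  · exact .inl (swap (sees_deleteEdges_sym2_of_mem_sym2 hAB hf hfA he h.symm))
  · exact .inr (swap (sees_deleteEdges_sym2_of_mem_sym2 hBA hf hfB he h.symm))
  · exact .inl (sees_deleteEdges_sym2_of_isClique hS
      (disjoint_compl_right.mono_left Set.subset_union_right) he hf heS hfS)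

theorem HasStrongColoring.of_isClique_separator [Finite V] (hS : G.IsClique S)
    (hAS : Disjoint A S) (hA : ∀ a ∈ A, ∀ y, G.Adj a y → y ∈ A ∪ S)
    (h₁ : (G.deleteEdges (A ∪ S)ᶜ.sym2).HasStrongColoring n)
    (h₂ : (G.deleteEdges A.sym2).HasStrongColoring n) : G.HasStrongColoring n := by
  obtain ⟨c₁, hc₁⟩ := h₁
  obtain ⟨c₂, hc₂⟩ := h₂
  let D := {e : Sym2 V // e ∈ G.edgeSet ∧ ∃ s ∈ e, s ∈ S}
  -- edges at the clique `S` pairwise see each other on both sides, so both colorings are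
  -- injective there and differ only by a permutation of the colors
  have hinj : ∀ {Y : Set V}, Disjoint S Y → ∀ {c : Sym2 V → Fin n},
      (G.deleteEdges Y.sym2).IsStrongEdgeColoring c → (fun e : D => c e).Injective := by
    intro Y hSY c hc e f hef
    by_contra hne
    obtain ⟨he, hf, h⟩ := sees_deleteEdges_sym2_of_isClique hS hSY e.2.1 f.2.1 e.2.2 f.2.2
    exact hc e he f hf (fun h => hne (Subtype.ext h)) h hef
  obtain ⟨σ, hσ⟩ := Equiv.Perm.exists_extending_pair _ _
    (hinj hAS.symm hc₂) (hinj (disjoint_compl_right.mono_left Set.subset_union_right) hc₁)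
  refine IsStrongEdgeColoring.glue hc₁ (c₂ := σ ∘ c₂)
    (fun e he f hf hef h => (hc₂ e he f hf hef h) ∘ fun h => σ.injective h) ?_
    fun _ he _ hf => sees_on_one_side_of_isClique_separator hS hA he hf
  intro e he₁ he₂
  rw [edgeSet_deleteEdges] at he₁ he₂
  have heS : ∃ s ∈ e, s ∈ S :=
    ((mem_sym2_or_mem_sym2_or_exists_mem hA he₁.1).resolve_left he₂.2).resolve_left he₁.2
  exact (hσ ⟨e, he₁.1, heS⟩).symm

end CliqueSeparator

lemma exists_separation_of_not_connected {S : Set V}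
    (hK : ¬ ((⊤ : G.Subgraph).deleteVerts S).coe.Connected) (hS : ∃ x, x ∉ S) :
    ∃ A : Set V, A.Nonempty ∧ (A ∪ S)ᶜ.Nonempty ∧ Disjoint A S ∧
      ∀ a ∈ A, ∀ y, G.Adj a y → y ∈ A ∪ S := by
  set K := ((⊤ : G.Subgraph).deleteVerts S).coe
  obtain ⟨x, hx⟩ := hS
  have hne : Nonempty ((⊤ : G.Subgraph).deleteVerts S).verts := ⟨⟨x, trivial, hx⟩⟩
  obtain ⟨x₀, y₀, hxy⟩ : ∃ x₀ y₀, ¬ K.Reachable x₀ y₀ := by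
    by_contra! h
    exact hK ((connected_iff K).2 ⟨h, hne⟩)
  refine ⟨Subtype.val '' {z | K.Reachable x₀ z}, ⟨x₀, x₀, .refl _, rfl⟩, ⟨y₀, ?_⟩,
    Set.disjoint_left.2 ?_, ?_⟩
  · rintro (⟨z, hz, hzy⟩ | hy)
    · exact hxy (Subtype.ext hzy ▸ hz)
    · exact y₀.2.2 hy
  · rintro _ ⟨z, -, rfl⟩
    exact z.2.2
  · rintro _ ⟨z, hz, rfl⟩ y hzy
    by_cases hy : y ∈ S
    · exact .inr hy
    · refine .inl ⟨⟨y, trivial, hy⟩, hz.trans (Adj.reachable ?_), rfl⟩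
      simpa [K, Subgraph.deleteVerts_adj, hy, hzy] using z.2.2

end SimpleGraph

open SimpleGraph

theorem statement5_general {V : Type*} [Fintype V]
    (G : SimpleGraph V) [DecidableRel G.Adj]
    (hore : ∀ u v : V, G.Adj u v → G.degree u + G.degree v ≤ 7)
    (hG : ¬ G.HasStrongColoring 13)
    (hmin : ∀ H : G.Subgraph, H ≠ ⊤ → H.coe.HasStrongColoring 13) :
    ∀ u v : V, G.Adj u v →
      (((⊤ : G.Subgraph).deleteVerts {u, v}).coe).Connected := by
  intro u v huv
  by_contra hK
  have hcrit : G.IsStrongCritical 13 := ⟨hG, hmin⟩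
  by_cases hV : ∃ x, x ∉ ({u, v} : Set V)
  swap
  · simp only [not_exists, not_not] at hV
    refine hcrit.not_neighborSet_subset hore huv fun y hy => .inl ?_
    exact (hV y).resolve_right (G.ne_of_adj hy).symm
  obtain ⟨A, ⟨x, hx⟩, ⟨y, hy⟩, hAS, hA⟩ := exists_separation_of_not_connected hK hV
  have hxS : x ∉ ({u, v} : Set V) := hAS.notMem_of_mem_left hx
  have hyS : y ∉ ({u, v} : Set V) := fun h => hy (.inr h)
  simp only [Set.mem_insert_iff, Set.mem_singleton_iff, not_or] at hxS hyS
  obtain ⟨x', hxx', hx'⟩ := hcrit.exists_adj_ne_ne hore huv hxS.1 hxS.2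
  obtain ⟨y', hyy', hy'⟩ := hcrit.exists_adj_ne_ne hore huv hyS.1 hyS.2
  have hx'A : x' ∈ A := (hA x hx x' hxx').resolve_right (by simpa using hx')
  have hy'B : y' ∈ (A ∪ {u, v})ᶜ := by
    simpa [notMem_of_adj_of_mem_compl hA y hy y' hyy'] using hy'
  exact hG (HasStrongColoring.of_isClique_separator (isClique_pair.2 fun _ => huv) hAS hA
    (hcrit.hasStrongColoring_of_lt (deleteEdges_lt_of_mem (e := s(y, y')) hyy' ⟨hy, hy'B⟩))
    (hcrit.hasStrongColoring_of_lt (deleteEdges_lt_of_mem (e := s(x, x')) hxx' ⟨hx, hx'A⟩)))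

theorem statement5 {V : Type*} [Fintype V] [DecidableEq V]
    (G : SimpleGraph V) [DecidableRel G.Adj]
    (hore : ∀ u v : V, G.Adj u v → G.degree u + G.degree v ≤ 7)
    (hG : ¬ G.HasStrongColoring 13)
    (hmin : ∀ H : G.Subgraph, H ≠ ⊤ → H.coe.HasStrongColoring 13) :
    ∀ u v : V, G.Adj u v →
      (((⊤ : G.Subgraph).deleteVerts {u, v}).coe).Connected :=
  statement5_general G hore hG hmin
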